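/- Let p be a prime number and let φ : ℂ^{2p−2} → ℂ^{2p−2} be given by φ_j(x', y') = x_j y_j and φ_{p−1+j}(x', y') = x̂_j ŷ_{−j} for 1 ≤ j ≤ p−1, where x = (1, x_1, …, x_{p−1}) and y = (1, y_1, …, y_{p−1}). Then: (i) for every solution z = (x_1, …, x_{p−1}, y_1, …, y_{p−1}) of φ(z) = 0, there is a unique pair (K, L) of subsets of ℤ_p* = {1, …, p−1} with |K| + |L| = p−1 such that supp(x) = L ∪ {0}, supp(x̂) = K ∪ {0}, supp(y) = ℤ_p \ L, and −supp(ŷ) = ℤ_p \ K; (ii) conversely, for every pair (K, L) of subsets of ℤ_p* with |K| + |L| = p−1, there exists exactly one pair (x, y) ∈ ℂ^p × ℂ^p of the form x = (1, x_1, …, x_{p−1}), y = (1, y_1, …, y_{p−1}) satisfying these four support conditions, and for this pair, z = (x_1, …, x_{p−1}, y_1, …, y_{p−1}) satisfies φ(z) = 0. -/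

import Mathlib

/-!
Chebotarev's theorem (every square minor of the Fourier matrix `(ζ^{jk})` of prime order `p` is
nonzero) gives Tao's uncertainty principle `|supp u| + |supp û| ≥ p + 1` for `u ≠ 0`.

For a zero of `φ`, `supp x ∩ supp y = {0}` and `supp x̂ ∩ -supp ŷ ⊆ {0}`, so each of these two pairs
has total size at most `p + 1`, while the uncertainty principle for `x` and `y` makes the four
sizes add up to at least `2p + 2`. All bounds are therefore equalities, which pins the supports
down. Conversely, when `|A| + |C| = p + 1` the vectors supported in `A` whose transform vanishes
off `C` are the kernel of a linear map with one more unknown than equations; by the uncertainty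
principle a nonzero element has support exactly `A` and transform support exactly `C`, and it is
unique up to scaling.

For Chebotarev, `D = det ((1 + X)^{a_i b_j}) ∈ ℤ[X]` is divisible by `X^m`, `m = n(n-1)/2`, and
`∏_{i<n} i!` times its `X^m`-coefficient is the product of the Vandermonde determinants of `a` and
`b`. If the minor `D(ζ - 1)` vanished, `ζ - 1` would be a root of `D / X^m`; as `Φ_p(X + 1)` has
constant term `p`, `p` would divide that coefficient and hence a Vandermonde determinant, so two
`a_i` or two `b_j` would agree mod `p`.
-/

open Finset Equiv Polynomial Matrix Function
open scoped Pointwise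

/-- The discrete Fourier transform on `ℂ^p`:
`û_j = (1/√p) ∑_{k=0}^{p-1} e^{2πi jk/p} u_k`, indices computed modulo `p`. -/
noncomputable def dft (p : ℕ) [NeZero p] (u : ZMod p → ℂ) : ZMod p → ℂ := fun j =>
  (1 / (Real.sqrt p : ℂ)) * ∑ k : ZMod p,
    Complex.exp (2 * (Real.pi : ℂ) * Complex.I * (j.val : ℂ) * (k.val : ℂ) / (p : ℂ)) * u k

theorem Finset.sum_range_card_lt_sum {s : Finset ℕ} (hs : s ≠ range #s) :
    ∑ i ∈ range #s, i < ∑ i ∈ s, i := by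
  set r := range #s
  have hrs : (r \ s).Nonempty := by
    rw [sdiff_nonempty]
    exact fun h => hs (eq_of_subset_of_card_le h (by simp [r])).symm
  calc ∑ i ∈ r, i = ∑ i ∈ r ∩ s, i + ∑ i ∈ r \ s, i := (sum_inter_add_sum_sdiff _ _ _).symm
    _ < ∑ i ∈ s ∩ r, i + #(r \ s) • #s := by
      rw [inter_comm, ← sum_const]
      gcongr with i hi
      exact mem_range.1 (mem_sdiff.1 hi).1
    _ = ∑ i ∈ s ∩ r, i + #(s \ r) • #s := by rw [card_sdiff_comm (by simp [r])]
    _ ≤ ∑ i ∈ s ∩ r, i + ∑ i ∈ s \ r, i := by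
      gcongr
      exact card_nsmul_le_sum _ _ _ fun i hi => not_lt.1 (mt mem_range.2 (mem_sdiff.1 hi).2)
    _ = ∑ i ∈ s, i := sum_inter_add_sum_sdiff _ _ _

theorem exists_perm_eq_val_of_sum_le {n : ℕ} {k : Fin n → ℕ} (hk : Injective k)
    (hsum : ∑ i, k i ≤ ∑ i : Fin n, (i : ℕ)) : ∃ g : Perm (Fin n), k = fun i => (g i : ℕ) := by
  have hcard : #(univ.image k) = n := by simp [card_image_of_injective _ hk]
  have himage : univ.image k = range n := by
    by_contra hne
    have := sum_range_card_lt_sum (s := univ.image k) (by rwa [hcard])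
    rw [hcard, sum_image fun _ _ _ _ h => hk h, ← Fin.sum_univ_eq_sum_range] at this
    omega
  have hlt (i : Fin n) : k i < n := mem_range.1 (himage ▸ mem_image_of_mem k (mem_univ i))
  have hbij : Bijective fun i => (⟨k i, hlt i⟩ : Fin n) :=
    Finite.injective_iff_bijective.1 fun i j h => hk (congrArg Fin.val h)
  exact ⟨Equiv.ofBijective _ hbij, rfl⟩

section AlternatingPowerSum

variable {R : Type*} [CommRing R] {n : ℕ}

def alternatingPowerSum (α β : Fin n → R) (j : ℕ) : R :=
  ∑ σ : Perm (Fin n), ((Perm.sign σ : ℤ) : R) * (∑ i, α (σ i) * β i) ^ j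

theorem alternatingPowerSum_eq_sum_piAntidiag (α β : Fin n → R) (j : ℕ) :
    alternatingPowerSum α β j = ∑ k ∈ piAntidiag univ j,
      (Nat.multinomial univ k : R) * (∏ i, β i ^ k i) * (of fun x i => α x ^ k i).det := by
  simp_rw [alternatingPowerSum, sum_pow_eq_sum_piAntidiag, mul_pow, prod_mul_distrib, mul_sum,
    det_apply', mul_sum]
  rw [sum_comm]
  exact sum_congr rfl fun k _ => sum_congr rfl fun σ _ => by simp only [of_apply]; ring

theorem det_of_pow_eq_zero_of_not_injective (α : Fin n → R) {k : Fin n → ℕ} (hk : ¬Injective k) :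
    (of fun x i => α x ^ k i).det = 0 := by
  obtain ⟨i, j, hij, hne⟩ := not_injective_iff.1 hk
  exact det_zero_of_column_eq hne fun x => by simp [hij]

theorem det_of_pow_perm (α : Fin n → R) (g : Perm (Fin n)) :
    (of fun x i => α x ^ (g i : ℕ)).det = (Perm.sign g : ℤ) * (vandermonde α).det :=
  det_permute' g (vandermonde α)

theorem sum_sign_mul_prod_pow_perm (β : Fin n → R) :
    ∑ g : Perm (Fin n), ((Perm.sign g : ℤ) : R) * ∏ i, β i ^ (g i : ℕ) = (vandermonde β).det := by
  rw [← det_transpose, det_apply']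
  rfl

theorem alternatingPowerSum_eq_zero (α β : Fin n → R) {j : ℕ} (hj : j < ∑ i : Fin n, (i : ℕ)) :
    alternatingPowerSum α β j = 0 := by
  rw [alternatingPowerSum_eq_sum_piAntidiag]
  refine sum_eq_zero fun k hk => ?_
  rw [det_of_pow_eq_zero_of_not_injective, mul_zero]
  intro hinj
  have hsum : ∑ i, k i = j := (mem_piAntidiag.1 hk).1
  obtain ⟨g, rfl⟩ := exists_perm_eq_val_of_sum_le hinj (by omega)
  rw [Equiv.sum_comp g (fun i => (i : ℕ))] at hsum
  omega

theorem prod_factorial_mul_alternatingPowerSum (α β : Fin n → R) :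
    (∏ i : Fin n, ((i : ℕ).factorial : R)) * alternatingPowerSum α β (∑ i : Fin n, (i : ℕ)) =
      ((∑ i : Fin n, (i : ℕ)).factorial : R) * (vandermonde α).det * (vandermonde β).det := by
  set m := ∑ i : Fin n, (i : ℕ)
  have hperm : univ.image (fun g : Perm (Fin n) => fun i => (g i : ℕ)) ⊆ piAntidiag univ m := by
    intro k hk
    obtain ⟨g, -, rfl⟩ := mem_image.1 hk
    exact mem_piAntidiag.2 ⟨Equiv.sum_comp g (fun i => (i : ℕ)), by simp⟩
  have hfactorial (g : Perm (Fin n)) :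
      (∏ i : Fin n, (i : ℕ).factorial) * Nat.multinomial univ (fun i => (g i : ℕ)) =
        m.factorial := by
    rw [← Equiv.prod_comp g (fun i => (i : ℕ).factorial), Nat.multinomial_spec,
      Equiv.sum_comp g (fun i => (i : ℕ))]
  rw [alternatingPowerSum_eq_sum_piAntidiag, ← sum_subset hperm, sum_image, mul_sum]
  · calc ∑ g : Perm (Fin n), (∏ i : Fin n, ((i : ℕ).factorial : R)) *
          ((Nat.multinomial univ (fun i => (g i : ℕ)) : R) * (∏ i, β i ^ (g i : ℕ)) *
            (of fun x i => α x ^ (g i : ℕ)).det)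
        = ∑ g : Perm (Fin n), (m.factorial : R) * (vandermonde α).det *
            (((Perm.sign g : ℤ) : R) * ∏ i, β i ^ (g i : ℕ)) := by
          refine sum_congr rfl fun g _ => ?_
          rw [det_of_pow_perm, ← hfactorial g]
          push_cast
          ring
      _ = _ := by rw [← mul_sum, sum_sign_mul_prod_pow_perm]
  · intro g _ g' _ h
    ext i
    exact congrFun h i
  · intro k hk hkperm
    rw [det_of_pow_eq_zero_of_not_injective, mul_zero]
    intro hinj
    obtain ⟨g, rfl⟩ := exists_perm_eq_val_of_sum_le hinj (mem_piAntidiag.1 hk).1.le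
    exact hkperm (mem_image_of_mem _ (mem_univ g))

theorem sum_sign_mul_eval_eq_coeff_mul_alternatingPowerSum (α β : Fin n → R) {Q : R[X]}
    (hQ : Q.natDegree ≤ ∑ i : Fin n, (i : ℕ)) :
    ∑ σ : Perm (Fin n), ((Perm.sign σ : ℤ) : R) * Q.eval (∑ i, α (σ i) * β i) =
      Q.coeff (∑ i : Fin n, (i : ℕ)) * alternatingPowerSum α β (∑ i : Fin n, (i : ℕ)) := by
  set m := ∑ i : Fin n, (i : ℕ)
  have hlower : ∀ j ∈ range m, Q.coeff j * alternatingPowerSum α β j = 0 := fun j hj => by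
    rw [alternatingPowerSum_eq_zero α β (mem_range.1 hj), mul_zero]
  calc ∑ σ : Perm (Fin n), ((Perm.sign σ : ℤ) : R) * Q.eval (∑ i, α (σ i) * β i)
      = ∑ j ∈ range (m + 1), Q.coeff j * alternatingPowerSum α β j := by
        simp_rw [eval_eq_sum_range' (Nat.lt_succ_of_le hQ), alternatingPowerSum, mul_sum]
        rw [sum_comm]
        exact sum_congr rfl fun _ _ => sum_congr rfl fun _ _ => by ring
    _ = Q.coeff m * alternatingPowerSum α β m := by
        rw [sum_range_succ, sum_eq_zero hlower, zero_add]

end AlternatingPowerSum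

section ChebotarevPoly

variable {n : ℕ}

noncomputable def chebotarevPoly (a b : Fin n → ℕ) : ℤ[X] :=
  (of fun i j => ((X : ℤ[X]) + 1) ^ (a i * b j)).det

theorem factorial_mul_coeff_chebotarevPoly (a b : Fin n → ℕ) {k : ℕ}
    (hk : k ≤ ∑ i : Fin n, (i : ℕ)) :
    (k.factorial : ℤ) * (chebotarevPoly a b).coeff k =
      (descPochhammer ℤ k).coeff (∑ i : Fin n, (i : ℕ)) *
        alternatingPowerSum (fun i => (a i : ℤ)) (fun i => (b i : ℤ)) (∑ i : Fin n, (i : ℕ)) := by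
  have h := sum_sign_mul_eval_eq_coeff_mul_alternatingPowerSum (fun i => (a i : ℤ))
    (fun i => (b i : ℤ)) ((descPochhammer_natDegree ℤ k).trans_le hk)
  simp only [Int.cast_id] at h
  rw [← h]
  simp only [chebotarevPoly, det_apply', finsetSum_coeff, coeff_intCast_mul, mul_sum, of_apply,
    prod_pow_eq_pow_sum, coeff_X_add_one_pow, Int.cast_id]
  refine sum_congr rfl fun σ _ => ?_
  rw [mul_left_comm, ← Nat.cast_mul, ← Nat.descFactorial_eq_factorial_mul_choose,
    ← descPochhammer_eval_eq_descFactorial]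
  push_cast
  rfl

theorem coeff_chebotarevPoly_eq_zero (a b : Fin n → ℕ) {k : ℕ} (hk : k < ∑ i : Fin n, (i : ℕ)) :
    (chebotarevPoly a b).coeff k = 0 := by
  have h := factorial_mul_coeff_chebotarevPoly a b hk.le
  rw [coeff_eq_zero_of_natDegree_lt (p := descPochhammer ℤ k) (by rwa [descPochhammer_natDegree]),
    zero_mul] at h
  exact (mul_eq_zero.1 h).resolve_left (by positivity)

theorem prod_factorial_mul_coeff_chebotarevPoly (a b : Fin n → ℕ) :
    (∏ i : Fin n, ((i : ℕ).factorial : ℤ)) * (chebotarevPoly a b).coeff (∑ i : Fin n, (i : ℕ)) =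
      (vandermonde fun i => (a i : ℤ)).det * (vandermonde fun i => (b i : ℤ)).det := by
  set m := ∑ i : Fin n, (i : ℕ)
  have hlead : (descPochhammer ℤ m).coeff m = 1 := by
    simpa [descPochhammer_natDegree] using (monic_descPochhammer ℤ m).coeff_natDegree
  have h := factorial_mul_coeff_chebotarevPoly a b le_rfl
  rw [hlead, one_mul] at h
  refine mul_left_cancel₀ (by positivity : (m.factorial : ℤ) ≠ 0) ?_
  calc (m.factorial : ℤ) * ((∏ i : Fin n, ((i : ℕ).factorial : ℤ)) * (chebotarevPoly a b).coeff m)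
      = (∏ i : Fin n, ((i : ℕ).factorial : ℤ)) *
          ((m.factorial : ℤ) * (chebotarevPoly a b).coeff m) := by ring
    _ = _ := by rw [h, prod_factorial_mul_alternatingPowerSum, mul_assoc]

end ChebotarevPoly

theorem IsPrimitiveRoot.prime_dvd_coeff_zero_of_aeval_sub_one {K : Type*} [Field K] [CharZero K]
    {p : ℕ} (hp : p.Prime) {ζ : K} (hζ : IsPrimitiveRoot ζ p) {H : ℤ[X]}
    (hH : aeval (ζ - 1) H = 0) : (p : ℤ) ∣ H.coeff 0 := by
  have := Fact.mk hp
  have hroot : aeval ζ (H.comp (X - 1)) = 0 := by simpa [aeval_comp] using hH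
  have hdvd : cyclotomic p ℤ ∣ H.comp (X - 1) := by
    rw [cyclotomic_eq_minpoly hζ hp.pos]
    exact minpoly.isIntegrallyClosed_dvd (hζ.isIntegral hp.pos) hroot
  simpa [eval_one_cyclotomic_prime, eval_comp, coeff_zero_eq_eval_zero] using eval_dvd (x := 1) hdvd

theorem IsPrimitiveRoot.det_pow_val_mul_val_ne_zero_fin {K : Type*} [Field K] [CharZero K]
    {p : ℕ} (hp : p.Prime) {ζ : K} (hζ : IsPrimitiveRoot ζ p) {n : ℕ} {a b : Fin n → ZMod p}
    (ha : Injective a) (hb : Injective b) :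
    (of fun i j => ζ ^ ((a i).val * (b j).val)).det ≠ 0 := by
  have := Fact.mk hp
  set G := chebotarevPoly (fun i => (a i).val) (fun j => (b j).val)
  set m := ∑ i : Fin n, (i : ℕ)
  have heval : aeval (ζ - 1) G = (of fun i j => ζ ^ ((a i).val * (b j).val)).det := by
    simp only [G, chebotarevPoly, AlgHom.map_det]
    congr 1
    ext i j
    simp
  obtain ⟨H, hGH⟩ : X ^ m ∣ G := X_pow_dvd_iff.2 fun d hd => coeff_chebotarevPoly_eq_zero _ _ hd
  intro hdet
  have hH : aeval (ζ - 1) H = 0 := by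
    rw [← heval, hGH, map_mul, map_pow, aeval_X] at hdet
    exact (mul_eq_zero.1 hdet).resolve_left (pow_ne_zero _ (sub_ne_zero.2 (hζ.ne_one hp.one_lt)))
  have hcoeff : (p : ℤ) ∣ G.coeff m := by
    rw [hGH, coeff_X_pow_mul', if_pos le_rfl, Nat.sub_self]
    exact hζ.prime_dvd_coeff_zero_of_aeval_sub_one hp hH
  have hcast (c : Fin n → ZMod p) :
      ((vandermonde fun i => ((c i).val : ℤ)).det : ZMod p) = (vandermonde c).det := by
    refine (RingHom.map_det (Int.castRingHom (ZMod p)) _).trans (congrArg det ?_)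
    ext i j
    simp
  have hV := (ZMod.intCast_zmod_eq_zero_iff_dvd _ p).2
    (hcoeff.mul_left (∏ i : Fin n, ((i : ℕ).factorial : ℤ)))
  rw [prod_factorial_mul_coeff_chebotarevPoly, Int.cast_mul, hcast, hcast] at hV
  exact mul_ne_zero (det_vandermonde_ne_zero_iff.2 ha) (det_vandermonde_ne_zero_iff.2 hb) hV

theorem IsPrimitiveRoot.det_pow_val_mul_val_ne_zero {K : Type*} [Field K] [CharZero K]
    {p : ℕ} (hp : p.Prime) {ζ : K} (hζ : IsPrimitiveRoot ζ p) {ι : Type*} [Fintype ι]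
    [DecidableEq ι] {a b : ι → ZMod p} (ha : Injective a) (hb : Injective b) :
    (of fun i j => ζ ^ ((a i).val * (b j).val)).det ≠ 0 := by
  let e := Fintype.equivFin ι
  rw [← det_submatrix_equiv_self e.symm]
  exact hζ.det_pow_val_mul_val_ne_zero_fin hp (ha.comp e.symm.injective) (hb.comp e.symm.injective)

section DFT

variable {p : ℕ} [NeZero p]

theorem dft_eq_zero_iff (u : ZMod p → ℂ) (j : ZMod p) :
    dft p u j = 0 ↔
      ∑ k, Complex.exp (2 * Real.pi * Complex.I / p) ^ (j.val * k.val) * u k = 0 := by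
  have hp : (p : ℂ) ≠ 0 := Nat.cast_ne_zero.2 (NeZero.ne p)
  have hexp (k : ZMod p) :
      Complex.exp (2 * Real.pi * Complex.I * j.val * k.val / p) =
        Complex.exp (2 * Real.pi * Complex.I / p) ^ (j.val * k.val) := by
    rw [← Complex.exp_nat_mul]
    push_cast
    ring_nf
  have hsqrt : (1 / (Real.sqrt p : ℂ)) ≠ 0 := by simp [NeZero.ne p]
  simp only [dft, mul_eq_zero, hsqrt, false_or, hexp]

theorem dft_smul (c : ℂ) (u : ZMod p → ℂ) : dft p (c • u) = c • dft p u := by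
  ext j
  simp only [dft, Pi.smul_apply, smul_eq_mul, mul_sum]
  exact sum_congr rfl fun _ _ => by ring

theorem dft_sub (u v : ZMod p → ℂ) : dft p (u - v) = dft p u - dft p v := by
  ext j
  simp only [dft, Pi.sub_apply, mul_sub, sum_sub_distrib]

theorem apply_eq_zero_of_notMem {A : Finset (ZMod p)} {u : ZMod p → ℂ}
    (hu : ({i | u i ≠ 0} : Finset (ZMod p)) ⊆ A) {i : ZMod p} (hi : i ∉ A) : u i = 0 := by
  by_contra h
  exact hi (hu ((mem_filter_univ i).2 h))

theorem sum_mul_eq_sum_subtype {A : Finset (ZMod p)} {u : ZMod p → ℂ}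
    (hu : ({i | u i ≠ 0} : Finset (ZMod p)) ⊆ A) (g : ZMod p → ℂ) :
    ∑ k, g k * u k = ∑ k : A, g k * u k := by
  rw [sum_coe_sort A (fun k => g k * u k)]
  refine (sum_subset (subset_univ A) fun k _ hk => ?_).symm
  rw [apply_eq_zero_of_notMem hu hk, mul_zero]

theorem eq_zero_of_dft_eq_zero_on (hp : p.Prime) {u : ZMod p → ℂ} {A B : Finset (ZMod p)}
    (hu : ({i | u i ≠ 0} : Finset (ZMod p)) ⊆ A) (hB : ∀ j ∈ B, dft p u j = 0) (hcard : #B = #A) :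
    u = 0 := by
  let e : A ≃ B := Fintype.equivOfCardEq (by simp [hcard])
  have hζ := Complex.isPrimitiveRoot_exp p hp.ne_zero
  have hdet := hζ.det_pow_val_mul_val_ne_zero hp (a := fun r : A => (e r : ZMod p))
    (b := fun c : A => (c : ZMod p)) (Subtype.val_injective.comp e.injective) Subtype.val_injective
  have hv := eq_zero_of_mulVec_eq_zero hdet (v := fun c : A => u c) <| funext fun r => by
    have := (dft_eq_zero_iff u (e r)).1 (hB _ (e r).2)
    rw [sum_mul_eq_sum_subtype hu] at this
    simpa [mulVec, dotProduct] using this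
  funext i
  by_cases hi : i ∈ A
  · exact congrFun hv ⟨i, hi⟩
  · exact apply_eq_zero_of_notMem hu hi

theorem card_support_add_card_support_dft (hp : p.Prime) {u : ZMod p → ℂ} (hu : u ≠ 0) :
    p + 1 ≤ #{i | u i ≠ 0} + #{j | dft p u j ≠ 0} := by
  by_contra! h
  have hZ : #{i | u i ≠ 0} ≤ #{j | dft p u j = 0} := by
    have := card_filter_add_card_filter_not (s := univ) (fun j => dft p u j = 0)
    rw [card_univ, ZMod.card] at this
    simp only [ne_eq] at h ⊢
    omega
  obtain ⟨B, hBZ, hB⟩ := exists_subset_card_eq hZ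
  exact hu (eq_zero_of_dft_eq_zero_on hp subset_rfl (fun j hj => (mem_filter.1 (hBZ hj)).2) hB)

theorem exists_ne_zero_dft_eq_zero_on {A Z : Finset (ZMod p)} (h : #Z < #A) :
    ∃ u : ZMod p → ℂ, u ≠ 0 ∧ ({i | u i ≠ 0} : Finset (ZMod p)) ⊆ A ∧ ∀ j ∈ Z, dft p u j = 0 := by
  let M : Matrix Z A ℂ := of fun r c =>
    Complex.exp (2 * Real.pi * Complex.I / p) ^ ((r : ZMod p).val * (c : ZMod p).val)
  have hker : LinearMap.ker M.mulVecLin ≠ ⊥ :=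
    LinearMap.ker_ne_bot_of_finrank_lt (by simpa [Module.finrank_fintype_fun_eq_card] using h)
  obtain ⟨v, hv, hv0⟩ := Submodule.ne_bot_iff _ |>.1 hker
  let u : ZMod p → ℂ := fun i => if hi : i ∈ A then v ⟨i, hi⟩ else 0
  have hu : ({i | u i ≠ 0} : Finset (ZMod p)) ⊆ A := fun i hi => by
    by_contra hA
    simp [u, hA] at hi
  refine ⟨u, fun hu0 => hv0 (funext fun c => ?_), hu, fun j hj => ?_⟩
  · simpa [u] using congrFun hu0 c
  · rw [dft_eq_zero_iff, sum_mul_eq_sum_subtype hu]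
    simpa [M, u, mulVec, dotProduct] using congrFun hv ⟨j, hj⟩

theorem eq_of_apply_eq_of_support_subset (hp : p.Prime) {u v : ZMod p → ℂ}
    {A C : Finset (ZMod p)} {a : ZMod p} (ha : a ∈ A) (hcard : #A + #C ≤ p + 1)
    (huA : ({i | u i ≠ 0} : Finset (ZMod p)) ⊆ A) (hvA : ({i | v i ≠ 0} : Finset (ZMod p)) ⊆ A)
    (huC : ({j | dft p u j ≠ 0} : Finset (ZMod p)) ⊆ C)
    (hvC : ({j | dft p v j ≠ 0} : Finset (ZMod p)) ⊆ C) (huv : u a = v a) : u = v := by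
  by_contra hne
  have hunc := card_support_add_card_support_dft hp (sub_ne_zero.2 hne)
  have hA : ({i | (u - v) i ≠ 0} : Finset (ZMod p)) ⊆ A.erase a := fun i hi => by
    rw [mem_filter_univ, Pi.sub_apply] at hi
    refine mem_erase.2 ⟨fun hia => hi (by rw [hia, huv, sub_self]), ?_⟩
    by_contra hiA
    rw [apply_eq_zero_of_notMem huA hiA, apply_eq_zero_of_notMem hvA hiA, sub_self] at hi
    exact hi rfl
  have hC : ({j | dft p (u - v) j ≠ 0} : Finset (ZMod p)) ⊆ C := fun j hj => by
    rw [mem_filter_univ, dft_sub, Pi.sub_apply] at hj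
    by_contra hjC
    rw [apply_eq_zero_of_notMem huC hjC, apply_eq_zero_of_notMem hvC hjC, sub_self] at hj
    exact hj rfl
  have hA' := card_le_card hA
  have := card_le_card hC
  have := card_pos.2 ⟨a, ha⟩
  rw [card_erase_of_mem ha] at hA'
  omega

theorem existsUnique_support_eq_dft_support_eq (hp : p.Prime) {A C : Finset (ZMod p)}
    (h0 : 0 ∈ A) (hcard : #A + #C = p + 1) :
    ∃! u : ZMod p → ℂ, u 0 = 1 ∧ ({i | u i ≠ 0} : Finset (ZMod p)) = A ∧
      ({j | dft p u j ≠ 0} : Finset (ZMod p)) = C := by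
  obtain ⟨u, hu, huA, huC⟩ := exists_ne_zero_dft_eq_zero_on (A := A) (Z := Cᶜ)
    (by rw [card_compl, ZMod.card]; have := card_pos.2 ⟨0, h0⟩; omega)
  have huC : ({j | dft p u j ≠ 0} : Finset (ZMod p)) ⊆ C := fun j hj => by
    by_contra hjC
    exact (mem_filter_univ j).1 hj (huC j (mem_compl.2 hjC))
  have hunc := card_support_add_card_support_dft hp hu
  have hA := eq_of_subset_of_card_le huA (by have := card_le_card huC; omega)
  have hC := eq_of_subset_of_card_le huC (by have := card_le_card huA; omega)
  have hu0 : u 0 ≠ 0 := by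
    rw [← hA] at h0
    simpa using h0
  refine ⟨(u 0)⁻¹ • u, ⟨by simp [hu0], by simpa [hu0] using hA, by simpa [dft_smul, hu0] using hC⟩,
    fun v ⟨hv0, hvA, hvC⟩ => ?_⟩
  refine eq_of_apply_eq_of_support_subset hp h0 hcard.le hvA.subset ?_ hvC.subset ?_
    (by simp [hv0, hu0])
  · simpa [hu0] using huA
  · simpa [dft_smul, hu0] using huC

end DFT

section SupportCombinatorics

variable {α : Type*} [Fintype α] [DecidableEq α]

theorem Finset.card_add_card_le_of_inter_subset_singleton {S T : Finset α} {a : α}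
    (h : S ∩ T ⊆ {a}) : #S + #T ≤ Fintype.card α + 1 := by
  have := card_union_add_card_inter S T
  have := card_le_univ (S ∪ T)
  have := card_le_card h
  rw [card_singleton] at this
  omega

theorem Finset.eq_compl_erase_of_inter_subset_singleton {S T : Finset α} {a : α}
    (h : S ∩ T ⊆ {a}) (hcard : Fintype.card α + 1 ≤ #S + #T) : a ∈ S ∧ T = (S.erase a)ᶜ := by
  have := card_union_add_card_inter S T
  have := card_le_univ (S ∪ T)
  have := card_le_card h
  rw [card_singleton] at this
  have hunion : S ∪ T = univ := eq_univ_of_card _ (by omega)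
  have hinter : S ∩ T = {a} := eq_of_subset_of_card_le h (by rw [card_singleton]; omega)
  have haS : a ∈ S := (mem_inter.1 (hinter ▸ mem_singleton_self a)).1
  refine ⟨haS, ext fun i => ?_⟩
  have hu := Finset.ext_iff.1 hunion i
  have hi := Finset.ext_iff.1 hinter i
  simp only [mem_union, mem_inter, mem_singleton, mem_univ, iff_true] at hu hi
  rw [mem_compl, mem_erase]
  grind

theorem filter_inter_filter_subset_singleton {M₀ : Type*} [MulZeroClass M₀] [NoZeroDivisors M₀]
    [DecidableEq M₀] {f g : α → M₀} {a : α} (h : ∀ j, j ≠ a → f j * g j = 0) :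
    ({i | f i ≠ 0} : Finset α) ∩ ({i | g i ≠ 0} : Finset α) ⊆ {a} := by
  intro j hj
  rw [mem_inter, mem_filter_univ, mem_filter_univ] at hj
  by_contra hja
  exact mul_ne_zero hj.1 hj.2 (h j (notMem_singleton.1 hja))

theorem mul_eq_zero_of_filter_eq_insert_of_filter_eq_compl {M₀ : Type*} [MulZeroClass M₀]
    [DecidableEq M₀] {f g : α → M₀} {a : α} {L : Finset α}
    (hf : ({i | f i ≠ 0} : Finset α) = insert a L) (hg : ({i | g i ≠ 0} : Finset α) = Lᶜ)
    {j : α} (hj : j ≠ a) : f j * g j = 0 := by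
  have hfj := Finset.ext_iff.1 hf j
  have hgj := Finset.ext_iff.1 hg j
  simp only [mem_filter_univ, mem_insert, mem_compl, hj, false_or] at hfj hgj
  by_cases hjL : j ∈ L
  · rw [show g j = 0 by tauto, mul_zero]
  · rw [show f j = 0 by tauto, zero_mul]

end SupportCombinatorics

theorem filter_comp_neg_ne_zero {G M : Type*} [AddGroup G] [Fintype G] [DecidableEq G] [Zero M]
    [DecidableEq M] (f : G → M) : ({i | f (-i) ≠ 0} : Finset G) = -({i | f i ≠ 0} : Finset G) := by
  ext i
  simp

def IsSupportType (p : ℕ) [NeZero p] (x y : ZMod p → ℂ) (K L : Finset (ZMod p)) : Prop :=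
  ({i | x i ≠ 0} : Finset (ZMod p)) = insert 0 L ∧
    ({i | dft p x i ≠ 0} : Finset (ZMod p)) = insert 0 K ∧
    ({i | y i ≠ 0} : Finset (ZMod p)) = Lᶜ ∧ ({i | dft p y (-i) ≠ 0} : Finset (ZMod p)) = Kᶜ

section Classification

variable {p : ℕ} [NeZero p]

theorem existsUnique_isSupportType (hp : p.Prime) {x y : ZMod p → ℂ} (hx0 : x 0 = 1)
    (hy0 : y 0 = 1) (hφ : ∀ j : ZMod p, j ≠ 0 → x j * y j = 0 ∧ dft p x j * dft p y (-j) = 0) :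
    ∃! KL : Finset (ZMod p) × Finset (ZMod p),
      0 ∉ KL.1 ∧ 0 ∉ KL.2 ∧ #KL.1 + #KL.2 = p - 1 ∧ IsSupportType p x y KL.1 KL.2 := by
  have hx := card_support_add_card_support_dft hp (u := x) fun h => by simp [h] at hx0
  have hy := card_support_add_card_support_dft hp (u := y) fun h => by simp [h] at hy0
  rw [← card_neg ({j | dft p y j ≠ 0} : Finset _), ← filter_comp_neg_ne_zero (dft p y)] at hy
  set X : Finset (ZMod p) := {i | x i ≠ 0}
  set Xh : Finset (ZMod p) := {i | dft p x i ≠ 0}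
  set Y : Finset (ZMod p) := {i | y i ≠ 0}
  set Yh : Finset (ZMod p) := {i | dft p y (-i) ≠ 0}
  have hXY : X ∩ Y ⊆ {0} := filter_inter_filter_subset_singleton fun j hj => (hφ j hj).1
  have hXYh : Xh ∩ Yh ⊆ {0} :=
    filter_inter_filter_subset_singleton (g := fun i => dft p y (-i)) fun j hj => (hφ j hj).2
  have h1 := card_add_card_le_of_inter_subset_singleton hXY
  have h2 := card_add_card_le_of_inter_subset_singleton hXYh
  rw [ZMod.card] at h1 h2
  obtain ⟨h0X, hY⟩ := eq_compl_erase_of_inter_subset_singleton hXY (by rw [ZMod.card]; omega)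
  obtain ⟨h0Xh, hYh⟩ := eq_compl_erase_of_inter_subset_singleton hXYh (by rw [ZMod.card]; omega)
  refine ⟨(Xh.erase 0, X.erase 0), ⟨notMem_erase 0 _, notMem_erase 0 _, ?_,
    (insert_erase h0X).symm, (insert_erase h0Xh).symm, hY, hYh⟩, ?_⟩
  · have := card_pos.2 ⟨0, h0X⟩
    have := card_pos.2 ⟨0, h0Xh⟩
    rw [card_erase_of_mem h0X, card_erase_of_mem h0Xh]
    omega
  · rintro ⟨K, L⟩ ⟨hK, hL, -, hX, hXh, -, -⟩
    exact Prod.ext (by simp [Xh, hXh, erase_insert hK]) (by simp [X, hX, erase_insert hL])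

theorem existsUnique_isSupportType_of_card (hp : p.Prime) {K L : Finset (ZMod p)} (hK : 0 ∉ K)
    (hL : 0 ∉ L) (hcard : #K + #L = p - 1) :
    ∃! xy : (ZMod p → ℂ) × (ZMod p → ℂ),
      xy.1 0 = 1 ∧ xy.2 0 = 1 ∧ IsSupportType p xy.1 xy.2 K L := by
  have := hp.two_le
  obtain ⟨x, ⟨hx0, hX, hXh⟩, hx⟩ := existsUnique_support_eq_dft_support_eq hp
    (C := insert 0 K) (mem_insert_self 0 L)
    (by rw [card_insert_of_notMem hL, card_insert_of_notMem hK]; omega)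
  obtain ⟨y, ⟨hy0, hY, hYh⟩, hy⟩ := existsUnique_support_eq_dft_support_eq hp
    (C := -Kᶜ) (mem_compl.2 hL) (by rw [card_neg, card_compl, card_compl, ZMod.card]; omega)
  refine ⟨(x, y), ⟨hx0, hy0, hX, hXh, hY, by rw [filter_comp_neg_ne_zero, hYh, neg_neg]⟩, ?_⟩
  rintro ⟨x', y'⟩ ⟨hx'0, hy'0, hX', hXh', hY', hYh'⟩
  rw [filter_comp_neg_ne_zero, neg_eq_iff_eq_neg] at hYh'
  exact Prod.ext (hx x' ⟨hx'0, hX', hXh'⟩) (hy y' ⟨hy'0, hY', hYh'⟩)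

theorem IsSupportType.mul_eq_zero {x y : ZMod p → ℂ} {K L : Finset (ZMod p)}
    (h : IsSupportType p x y K L) (j : ZMod p) (hj : j ≠ 0) :
    x j * y j = 0 ∧ dft p x j * dft p y (-j) = 0 :=
  ⟨mul_eq_zero_of_filter_eq_insert_of_filter_eq_compl h.1 h.2.2.1 hj,
    mul_eq_zero_of_filter_eq_insert_of_filter_eq_compl (g := fun i => dft p y (-i)) h.2.1 h.2.2.2
      hj⟩

end Classification

theorem setOf_ne_zero_eq_union_zero_iff {α M : Type*} [Fintype α] [DecidableEq α] [Zero α]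
    [Zero M] [DecidableEq M] (f : α → M) (L : Finset α) :
    {i | f i ≠ 0} = ↑L ∪ {0} ↔ ({i | f i ≠ 0} : Finset α) = insert 0 L := by
  rw [← coe_inj, coe_filter_univ, coe_insert, Set.insert_eq, Set.union_comm]

theorem setOf_ne_zero_eq_univ_diff_iff {α M : Type*} [Fintype α] [DecidableEq α]
    [Zero M] [DecidableEq M] (f : α → M) (L : Finset α) :
    {i | f i ≠ 0} = Set.univ \ ↑L ↔ ({i | f i ≠ 0} : Finset α) = Lᶜ := by
  rw [← coe_inj, coe_filter_univ, coe_compl, Set.compl_eq_univ_sdiff]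

/-- Classification of the zeros of `φ` (where `φ_j = x_j y_j`, `φ_{p-1+j} = x̂_j ŷ_{-j}`,
`x = (1,x_1,…,x_{p-1})`, `y = (1,y_1,…,y_{p-1})`):
(i) every zero determines a unique pair `(K, L)` of subsets of `ℤ_p* = {1,…,p-1}` with
`|K| + |L| = p-1` such that `supp(x) = L ∪ {0}`, `supp(x̂) = K ∪ {0}`,
`supp(y) = ℤ_p \ L`, `-supp(ŷ) = ℤ_p \ K`;
(ii) conversely, every such pair `(K, L)` arises from exactly one pair `(x, y)` with
`x_0 = y_0 = 1` satisfying the four support conditions, and that pair is a zero of `φ`. -/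
theorem phi_zeros_classification (p : ℕ) (hp : p.Prime) [NeZero p] :
    (∀ x y : ZMod p → ℂ, x 0 = 1 → y 0 = 1 →
      (∀ j : ZMod p, j ≠ 0 → x j * y j = 0 ∧ dft p x j * dft p y (-j) = 0) →
      ∃! KL : Finset (ZMod p) × Finset (ZMod p),
        (0 : ZMod p) ∉ KL.1 ∧ (0 : ZMod p) ∉ KL.2 ∧ KL.1.card + KL.2.card = p - 1 ∧
        {i : ZMod p | x i ≠ 0} = ↑KL.2 ∪ {0} ∧
        {i : ZMod p | dft p x i ≠ 0} = ↑KL.1 ∪ {0} ∧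
        {i : ZMod p | y i ≠ 0} = Set.univ \ ↑KL.2 ∧
        {i : ZMod p | dft p y (-i) ≠ 0} = Set.univ \ ↑KL.1) ∧
    (∀ K L : Finset (ZMod p), (0 : ZMod p) ∉ K → (0 : ZMod p) ∉ L →
      K.card + L.card = p - 1 →
      (∃! xy : (ZMod p → ℂ) × (ZMod p → ℂ),
        xy.1 0 = 1 ∧ xy.2 0 = 1 ∧
        {i : ZMod p | xy.1 i ≠ 0} = ↑L ∪ {0} ∧
        {i : ZMod p | dft p xy.1 i ≠ 0} = ↑K ∪ {0} ∧
        {i : ZMod p | xy.2 i ≠ 0} = Set.univ \ ↑L ∧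
        {i : ZMod p | dft p xy.2 (-i) ≠ 0} = Set.univ \ ↑K) ∧
      (∀ x y : ZMod p → ℂ, x 0 = 1 → y 0 = 1 →
        {i : ZMod p | x i ≠ 0} = ↑L ∪ {0} →
        {i : ZMod p | dft p x i ≠ 0} = ↑K ∪ {0} →
        {i : ZMod p | y i ≠ 0} = Set.univ \ ↑L →
        {i : ZMod p | dft p y (-i) ≠ 0} = Set.univ \ ↑K →
        ∀ j : ZMod p, j ≠ 0 → x j * y j = 0 ∧ dft p x j * dft p y (-j) = 0)) := by
  simp only [setOf_ne_zero_eq_union_zero_iff, setOf_ne_zero_eq_univ_diff_iff]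
  refine ⟨fun x y hx0 hy0 hφ => existsUnique_isSupportType hp hx0 hy0 hφ,
    fun K L hK hL hcard => ⟨existsUnique_isSupportType_of_card hp hK hL hcard, ?_⟩⟩
  exact fun x y _ _ hX hXh hY hYh => IsSupportType.mul_eq_zero ⟨hX, hXh, hY, hYh⟩
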